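/- Let n ≥ 1. For a ∈ ℂⁿ with √(1−2/e) ≤ |a| < 1, define h_a(z) = (log(2/(1−|a|²)))^{−1}·(⟨z,a⟩ − 1)·[(1 + log(2/(1 − ⟨z,a⟩)))² + 1] for z in the open unit ball B, where log is the principal branch (Re(1 − ⟨z,a⟩) > 0). Then sup over all such a of the Zygmund norm ‖h_a‖ is finite; that is, there exists M < ∞ such that ‖h_a‖ ≤ M for every a with √(1−2/e) ≤ |a| < 1. -/

import Mathlib

open MeasureTheory Metric Filter

noncomputable section

/-- `E n` is `ℂⁿ` with the Euclidean structure. -/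
abbrev E (n : ℕ) := EuclideanSpace ℂ (Fin n)

/-- The open unit ball of `ℂⁿ`. -/
def uball (n : ℕ) : Set (E n) := Metric.ball 0 1

/-- The radial derivative `Rf(z) = ∑ z_j ∂f/∂z_j(z)`. -/
def rad (n : ℕ) (f : E n → ℂ) (z : E n) : ℂ :=
  ∑ j : Fin n, z j * fderiv ℂ f z (EuclideanSpace.single j 1)

/-- The set of values `(1-|z|²)|R(Rf)(z)|`, `z ∈ B`. -/
def zygSet (n : ℕ) (f : E n → ℂ) : Set ℝ :=
  {x | ∃ z ∈ uball n, x = (1 - ‖z‖ ^ 2) * ‖rad n (rad n f) z‖}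

/-- Membership in the Zygmund space: `sup_{z∈B} (1-|z|²)|R(Rf)(z)| < ∞`. -/
def memZ (n : ℕ) (f : E n → ℂ) : Prop := BddAbove (zygSet n f)

/-- The Zygmund norm `‖f‖ = |f(0)| + sup_{z∈B} (1-|z|²)|R(Rf)(z)|`. -/
def zygNorm (n : ℕ) (f : E n → ℂ) : ℝ :=
  ‖f 0‖ + sSup (zygSet n f)

/-- The extended Cesàro operator `T_g f(z) = ∫₀¹ f(tz) Rg(tz) dt/t`. -/
def Tg (n : ℕ) (g f : E n → ℂ) (z : E n) : ℂ :=
  ∫ t in (0:ℝ)..1, f (t • z) * rad n g (t • z) / (t : ℂ)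

/-- The operator `I_g f(z) = ∫₀¹ Rf(tz) g(tz) dt/t`. -/
def Ig (n : ℕ) (g f : E n → ℂ) (z : E n) : ℂ :=
  ∫ t in (0:ℝ)..1, rad n f (t • z) * g (t • z) / (t : ℂ)

/-- The Hermitian pairing `⟨z,w⟩ = ∑ z_j conj(w_j)`. -/
def hip (n : ℕ) (z w : E n) : ℂ := ∑ j : Fin n, z j * (starRingEnd ℂ) (w j)

/-- The test function
`h_a(z) = (log(2/(1-|a|²)))⁻¹ (⟨z,a⟩-1) [(1+log(2/(1-⟨z,a⟩)))² + 1]`. -/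
def ha (n : ℕ) (a : E n) (z : E n) : ℂ :=
  ((Real.log (2 / (1 - ‖a‖ ^ 2)) : ℂ))⁻¹ * (hip n z a - 1) *
    ((1 + Complex.log (2 / (1 - hip n z a))) ^ 2 + 1)

/-! Write `w = ⟨z,a⟩`, `L(w) = log (2/(1-w))` and `c = log (2/(1-|a|²))`, so that `c ≥ 1` on the
given range of `|a|`. Then `h_a(z) = c⁻¹ G(w)` where `G(w) = (w-1)((1+L)²+1)` has `G' = L²`; hence
`R h_a = c⁻¹ w L²` and `R R h_a = c⁻¹ w (L² + 2wL/(1-w))`. As `1 - |z|² ≤ 2|1-w|`, the weighted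
second derivative is at most `c⁻¹ (2|1-w||L|² + 4|L|)`. The first term is bounded because
`|L| ≤ log (2/|1-w|) + π` and `(log t + π)² ≤ π² t` for `t ≥ 1`; the second because
`|1-w| ≥ (1-|a|²)/2` gives `|L| ≤ log 2 + c + π`, and this growth is exactly absorbed by `c⁻¹`. -/

open Topology

def logTwoDiv (w : ℂ) : ℂ := Complex.log (2 / (1 - w))

section OneVariable

variable {w : ℂ}

lemma re_one_sub_pos_of_norm_lt_one (hw : ‖w‖ < 1) : 0 < (1 - w).re := by
  have := Complex.re_le_norm w
  simp only [Complex.sub_re, Complex.one_re]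
  linarith

lemma two_div_one_sub_mem_slitPlane (hw : 0 < (1 - w).re) : 2 / (1 - w) ∈ Complex.slitPlane := by
  refine Or.inl ?_
  have : 0 < (1 - w)⁻¹.re := by
    rw [Complex.inv_re]
    exact div_pos hw (Complex.normSq_pos.2 fun h => by simp [h] at hw)
  simpa [div_eq_mul_inv] using this

lemma hasDerivAt_logTwoDiv (hw : 0 < (1 - w).re) : HasDerivAt logTwoDiv (1 - w)⁻¹ w := by
  have h1 : (1 : ℂ) - w ≠ 0 := fun h => by simp [h] at hw
  have h := (((hasDerivAt_id w).const_sub 1).inv h1).const_mul (2 : ℂ)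
  convert h.clog (two_div_one_sub_mem_slitPlane hw) using 1
  · ext; simp [logTwoDiv, div_eq_mul_inv]
  · simp only [id, Pi.inv_apply]
    field_simp

-- The cross terms cancel because `L' = (1 - w)⁻¹`, leaving `G' = L²`.
lemma hasDerivAt_sub_one_mul_sq_add_one (k : ℂ) (hw : 0 < (1 - w).re) :
    HasDerivAt (fun y => k * (y - 1) * ((1 + logTwoDiv y) ^ 2 + 1)) (k * logTwoDiv w ^ 2) w := by
  have h1 : (1 : ℂ) - w ≠ 0 := fun h => by simp [h] at hw
  refine ((((hasDerivAt_id' w).sub_const 1).const_mul k).fun_mul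
    ((((hasDerivAt_logTwoDiv hw).const_add 1).fun_pow 2).add_const 1)).congr_deriv ?_
  field_simp
  ring

lemma hasDerivAt_mul_sq_logTwoDiv (k : ℂ) (hw : 0 < (1 - w).re) :
    HasDerivAt (fun y => k * (y * logTwoDiv y ^ 2))
      (k * (logTwoDiv w ^ 2 + w * (2 * logTwoDiv w / (1 - w)))) w := by
  refine (((hasDerivAt_id' w).fun_mul ((hasDerivAt_logTwoDiv hw).fun_pow 2)).const_mul k
    ).congr_deriv ?_
  ring

end OneVariable

section Radial

variable {n : ℕ}

lemma rad_eq_fderiv_apply (f : E n → ℂ) (z : E n) : rad n f z = fderiv ℂ f z z := by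
  classical
  unfold rad
  generalize fderiv ℂ f z = D
  conv_rhs => rw [← (EuclideanSpace.basisFun (Fin n) ℂ).sum_repr z]
  simp [map_sum, EuclideanSpace.basisFun_apply]

lemma rad_congr {f g : E n → ℂ} {z : E n} (h : f =ᶠ[𝓝 z] g) : rad n f z = rad n g z := by
  simp only [rad, h.fderiv_eq]

lemma hip_eq_innerSL (z a : E n) : hip n z a = innerSL ℂ a z := by
  simp [hip, PiLp.inner_apply]

lemma norm_hip_le (z a : E n) : ‖hip n z a‖ ≤ ‖z‖ * ‖a‖ := by
  rw [hip_eq_innerSL, mul_comm]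
  exact norm_inner_le_norm a z

lemma rad_comp_hip (a : E n) {G : ℂ → ℂ} {G' : ℂ} {z : E n} (h : HasDerivAt G G' (hip n z a)) :
    rad n (fun y => G (hip n y a)) z = hip n z a * G' := by
  have hfun : (fun y => G (hip n y a)) = G ∘ innerSL ℂ a := by
    ext y; simp [hip_eq_innerSL]
  rw [hip_eq_innerSL] at h ⊢
  rw [rad_eq_fderiv_apply, hfun, (h.comp_hasFDerivAt z (innerSL ℂ a).hasFDerivAt).fderiv]
  simp [mul_comm]

end Radial

section TestFunction

variable {n : ℕ} {a z : E n}

lemma ha_eq_logTwoDiv (a : E n) : ha n a = fun y => (Real.log (2 / (1 - ‖a‖ ^ 2)) : ℂ)⁻¹ *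
    (hip n y a - 1) * ((1 + logTwoDiv (hip n y a)) ^ 2 + 1) := rfl

lemma rad_ha (hz : ‖hip n z a‖ < 1) :
    rad n (ha n a) z = hip n z a *
      ((Real.log (2 / (1 - ‖a‖ ^ 2)) : ℂ)⁻¹ * logTwoDiv (hip n z a) ^ 2) := by
  rw [ha_eq_logTwoDiv]
  exact rad_comp_hip a (G := fun w => _ * (w - 1) * ((1 + logTwoDiv w) ^ 2 + 1))
    (hasDerivAt_sub_one_mul_sq_add_one _ (re_one_sub_pos_of_norm_lt_one hz))

lemma rad_rad_ha (hz : ‖hip n z a‖ < 1) :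
    rad n (rad n (ha n a)) z = hip n z a * ((Real.log (2 / (1 - ‖a‖ ^ 2)) : ℂ)⁻¹ *
      (logTwoDiv (hip n z a) ^ 2 +
        hip n z a * (2 * logTwoDiv (hip n z a) / (1 - hip n z a)))) := by
  have hopen : IsOpen {y : E n | ‖hip n y a‖ < 1} := by
    simp only [hip_eq_innerSL]
    exact isOpen_lt (innerSL ℂ a).continuous.norm continuous_const
  have hev : rad n (ha n a) =ᶠ[𝓝 z] fun y =>
      (Real.log (2 / (1 - ‖a‖ ^ 2)) : ℂ)⁻¹ * (hip n y a * logTwoDiv (hip n y a) ^ 2) :=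
    Filter.eventuallyEq_of_mem (hopen.mem_nhds hz) fun y hy => (rad_ha hy).trans (by ring)
  rw [rad_congr hev]
  exact rad_comp_hip a (G := fun w => _ * (w * logTwoDiv w ^ 2))
    (hasDerivAt_mul_sq_logTwoDiv _ (re_one_sub_pos_of_norm_lt_one hz))

end TestFunction

section Estimates

open Real

lemma log_add_pi_sq_le {t : ℝ} (ht : 1 ≤ t) : (log t + π) ^ 2 ≤ π ^ 2 * t := by
  have hs : 1 ≤ √t := Real.one_le_sqrt.2 ht
  have hlog : log t ≤ 2 * (√t - 1) := by
    have := Real.log_le_sub_one_of_pos (by positivity : 0 < √t)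
    rw [Real.log_sqrt (by positivity)] at this
    linarith
  have hle : log t + π ≤ π * √t := by nlinarith [Real.pi_gt_three]
  calc (log t + π) ^ 2 ≤ (π * √t) ^ 2 :=
        pow_le_pow_left₀ (by linarith [Real.log_nonneg ht, Real.pi_pos]) hle 2
    _ = π ^ 2 * t := by rw [mul_pow, Real.sq_sqrt (by positivity)]

variable {w : ℂ}

lemma one_sub_norm_le_norm_one_sub (w : ℂ) : 1 - ‖w‖ ≤ ‖1 - w‖ := by
  simpa using norm_sub_norm_le (1 : ℂ) w

lemma norm_one_sub_pos (hw : ‖w‖ < 1) : 0 < ‖1 - w‖ := by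
  linarith [one_sub_norm_le_norm_one_sub w]

lemma one_le_two_div_norm_one_sub (hw : ‖w‖ < 1) : 1 ≤ 2 / ‖1 - w‖ := by
  rw [le_div_iff₀ (norm_one_sub_pos hw)]
  have := norm_sub_le (1 : ℂ) w
  rw [norm_one] at this
  linarith

lemma one_sub_sq_le_two_mul_norm_one_sub {r : ℝ} (hwr : ‖w‖ ≤ r) : 1 - r ^ 2 ≤ 2 * ‖1 - w‖ := by
  nlinarith [sq_nonneg (1 - r), one_sub_norm_le_norm_one_sub w]

lemma norm_logTwoDiv_le (hw : ‖w‖ < 1) : ‖logTwoDiv w‖ ≤ log (2 / ‖1 - w‖) + π := by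
  have hre : (logTwoDiv w).re = log (2 / ‖1 - w‖) := by
    rw [logTwoDiv, Complex.log_re, norm_div, Complex.norm_two]
  calc ‖logTwoDiv w‖ ≤ |(logTwoDiv w).re| + |(logTwoDiv w).im| :=
        Complex.norm_le_abs_re_add_abs_im _
    _ ≤ log (2 / ‖1 - w‖) + π := by
        rw [hre, abs_of_nonneg (Real.log_nonneg (one_le_two_div_norm_one_sub hw))]
        gcongr
        rw [logTwoDiv, Complex.log_im]
        exact Complex.abs_arg_le_pi _

lemma norm_one_sub_mul_sq_norm_logTwoDiv_le (hw : ‖w‖ < 1) :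
    ‖1 - w‖ * ‖logTwoDiv w‖ ^ 2 ≤ 2 * π ^ 2 := by
  have hd := norm_one_sub_pos hw
  calc ‖1 - w‖ * ‖logTwoDiv w‖ ^ 2 ≤ ‖1 - w‖ * (log (2 / ‖1 - w‖) + π) ^ 2 := by
        gcongr
        exact norm_logTwoDiv_le hw
    _ ≤ ‖1 - w‖ * (π ^ 2 * (2 / ‖1 - w‖)) := by
        gcongr
        exact log_add_pi_sq_le (one_le_two_div_norm_one_sub hw)
    _ = 2 * π ^ 2 := by field_simp

lemma norm_logTwoDiv_le_log_two_add {s : ℝ} (hws : ‖w‖ ≤ s) (hs : s < 1) :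
    ‖logTwoDiv w‖ ≤ log 2 + log (2 / (1 - s ^ 2)) + π := by
  have hw : ‖w‖ < 1 := hws.trans_lt hs
  have hs2 : 0 < 1 - s ^ 2 := by nlinarith [norm_nonneg w]
  have hlog : log (2 / ‖1 - w‖) ≤ log 2 + log (2 / (1 - s ^ 2)) := by
    rw [← Real.log_mul two_ne_zero (by positivity)]
    apply Real.log_le_log (div_pos two_pos (norm_one_sub_pos hw))
    rw [div_le_iff₀ (norm_one_sub_pos hw)]
    field_simp
    linarith [one_sub_sq_le_two_mul_norm_one_sub hws]
  linarith [norm_logTwoDiv_le hw]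

lemma one_sub_sq_mul_norm_le {r c : ℝ} (hw : ‖w‖ < 1) (hwr : ‖w‖ ≤ r) (hc : 1 ≤ c)
    (hL : ‖logTwoDiv w‖ ≤ log 2 + c + π) :
    (1 - r ^ 2) * ‖w * ((c : ℂ)⁻¹ * (logTwoDiv w ^ 2 + w * (2 * logTwoDiv w / (1 - w))))‖ ≤
      4 * π ^ 2 + 4 * (log 2 + π + 1) := by
  set d := ‖1 - w‖
  set ℓ := ‖logTwoDiv w‖
  have hd : 0 < d := norm_one_sub_pos hw
  have hc0 : 0 < c := one_pos.trans_le hc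
  have hnorm : ‖w * ((c : ℂ)⁻¹ * (logTwoDiv w ^ 2 + w * (2 * logTwoDiv w / (1 - w))))‖ ≤
      c⁻¹ * (ℓ ^ 2 + 2 * ℓ / d) := by
    rw [norm_mul, norm_mul, norm_inv, Complex.norm_real, Real.norm_of_nonneg hc0.le]
    calc ‖w‖ * (c⁻¹ * ‖logTwoDiv w ^ 2 + w * (2 * logTwoDiv w / (1 - w))‖)
        ≤ 1 * (c⁻¹ * (ℓ ^ 2 + 1 * (2 * ℓ / d))) := by
          gcongr
          refine (norm_add_le _ _).trans ?_
          rw [norm_pow, norm_mul, norm_div, norm_mul, Complex.norm_two]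
          gcongr
      _ = c⁻¹ * (ℓ ^ 2 + 2 * ℓ / d) := by ring
  calc (1 - r ^ 2) * ‖w * ((c : ℂ)⁻¹ * (logTwoDiv w ^ 2 + w * (2 * logTwoDiv w / (1 - w))))‖
      ≤ 2 * d * (c⁻¹ * (ℓ ^ 2 + 2 * ℓ / d)) :=
        mul_le_mul (one_sub_sq_le_two_mul_norm_one_sub hwr) hnorm (norm_nonneg _) (by positivity)
    _ = c⁻¹ * (2 * (d * ℓ ^ 2)) + 4 * (ℓ / c) := by field_simp; ring
    _ ≤ 1 * (2 * (2 * π ^ 2)) + 4 * (log 2 + π + 1) := by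
        gcongr ?_ * (2 * ?_) + 4 * ?_
        · exact inv_le_one_of_one_le₀ hc
        · exact norm_one_sub_mul_sq_norm_logTwoDiv_le hw
        · rw [div_le_iff₀ hc0]
          nlinarith [Real.log_nonneg one_le_two, Real.pi_pos]
    _ = 4 * π ^ 2 + 4 * (log 2 + π + 1) := by ring

end Estimates

open Real in
lemma one_le_log_two_div_one_sub_sq {x : ℝ} (hx : √(1 - 2 / exp 1) ≤ x) (hx1 : x < 1) :
    1 ≤ log (2 / (1 - x ^ 2)) := by
  have hx2 : 1 - 2 / exp 1 ≤ x ^ 2 := (Real.sqrt_le_iff.1 hx).2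
  have hpos : 0 < 1 - x ^ 2 := by nlinarith [Real.sqrt_nonneg (1 - 2 / exp 1)]
  rw [Real.le_log_iff_exp_le (by positivity), le_div_iff₀ hpos]
  have : exp 1 * (2 / exp 1) = 2 := by field_simp
  nlinarith [Real.exp_pos 1]

lemma norm_ha_zero_le {n : ℕ} {a : E n} (hc : 1 ≤ Real.log (2 / (1 - ‖a‖ ^ 2))) :
    ‖ha n a 0‖ ≤ (1 + Real.log 2) ^ 2 + 1 := by
  have hlog2 : Complex.log 2 = (Real.log 2 : ℂ) := by
    rw [Complex.ofReal_log zero_le_two, Complex.ofReal_ofNat]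
  have h0 : ha n a 0 =
      ((-((Real.log (2 / (1 - ‖a‖ ^ 2)))⁻¹ * ((1 + Real.log 2) ^ 2 + 1)) : ℝ) : ℂ) := by
    have hip0 : hip n 0 a = 0 := by simp [hip]
    rw [ha, hip0, sub_zero, div_one, hlog2]
    push_cast
    ring
  rw [h0, Complex.norm_real, norm_neg, Real.norm_of_nonneg (by positivity)]
  exact mul_le_of_le_one_left (by positivity) (inv_le_one_of_one_le₀ hc)

theorem ha_zygNorm_bounded_general (n : ℕ) :
    ∃ M : ℝ, ∀ a : E n, Real.sqrt (1 - 2 / Real.exp 1) ≤ ‖a‖ → ‖a‖ < 1 →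
      zygNorm n (ha n a) ≤ M := by
  refine ⟨((1 + Real.log 2) ^ 2 + 1) + (4 * Real.pi ^ 2 + 4 * (Real.log 2 + Real.pi + 1)),
    fun a hlo hhi => ?_⟩
  have hc := one_le_log_two_div_one_sub_sq hlo hhi
  refine add_le_add (norm_ha_zero_le hc) (Real.sSup_le ?_ (by positivity))
  rintro _ ⟨z, hz, rfl⟩
  rw [uball, mem_ball_zero_iff] at hz
  have hwz : ‖hip n z a‖ ≤ ‖z‖ :=
    (norm_hip_le z a).trans (mul_le_of_le_one_right (norm_nonneg _) hhi.le)
  have hwa : ‖hip n z a‖ ≤ ‖a‖ :=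
    (norm_hip_le z a).trans (mul_le_of_le_one_left (norm_nonneg _) hz.le)
  have hw : ‖hip n z a‖ < 1 := hwa.trans_lt hhi
  rw [rad_rad_ha hw]
  exact one_sub_sq_mul_norm_le hw hwz hc (norm_logTwoDiv_le_log_two_add hwa hhi)

/-- The family `h_a`, `√(1-2/e) ≤ |a| < 1`, is bounded in the Zygmund norm. -/
theorem ha_zygNorm_bounded (n : ℕ) (hn : 1 ≤ n) :
    ∃ M : ℝ, ∀ a : E n, Real.sqrt (1 - 2 / Real.exp 1) ≤ ‖a‖ → ‖a‖ < 1 →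
      zygNorm n (ha n a) ≤ M :=
  ha_zygNorm_bounded_general n
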